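/- arXiv:1906.01013 — 6 statements merged into one kernel-verified Lean document; each statement's English description precedes it below -/
import Mathlib

section
/- Let X be a Köthe sequence space and let Ω be a centralizer on X which is boundedly equivalent to Ω₁ + iΩ₂, where Ω₁ and Ω₂ are real centralizers on X. Then Ω is projectively equivalent to a real centralizer on X if and only if (1) Ω₁ is trivial, or (2) Ω₂ is trivial, or (3) Ω₁ and Ω₂ are projectively equivalent. -/
open scoped ENNReal

noncomputable section

/-- A Köthe sequence space in the sense of Kalton: a linear subspace of `ℂ^ℕ` with a
complete norm whose unit ball is closed in the product topology, which is solid, and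
which sits between a weighted `ℓ₁` space and a weighted `ℓ∞` space (the norm being
interpreted as `∞` outside the space). -/
structure KotheSequenceSpace where
  /-- membership in the space -/
  Mem : (ℕ → ℂ) → Prop
  /-- the norm (only meaningful on members) -/
  nrm : (ℕ → ℂ) → ℝ
  zero_mem : Mem 0
  add_mem : ∀ x y, Mem x → Mem y → Mem (x + y)
  smul_mem : ∀ (a : ℂ) (x), Mem x → Mem (a • x)
  nrm_nonneg : ∀ x, Mem x → 0 ≤ nrm x
  nrm_eq_zero : ∀ x, Mem x → nrm x = 0 → x = 0
  nrm_add_le : ∀ x y, Mem x → Mem y → nrm (x + y) ≤ nrm x + nrm y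
  nrm_smul : ∀ (a : ℂ) (x), Mem x → nrm (a • x) = ‖a‖ * nrm x
  /-- completeness: every Cauchy sequence in the space converges in norm to a member -/
  complete : ∀ f : ℕ → (ℕ → ℂ), (∀ n, Mem (f n)) →
    (∀ ε : ℝ, 0 < ε → ∃ N : ℕ, ∀ m, N ≤ m → ∀ n, N ≤ n → nrm (f m - f n) < ε) →
    ∃ g, Mem g ∧ ∀ ε : ℝ, 0 < ε → ∃ N : ℕ, ∀ n, N ≤ n → nrm (f n - g) < ε
  /-- the closed unit ball is closed in the product topology of `ℂ^ℕ` -/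
  isClosed_ball : IsClosed {x : ℕ → ℂ | Mem x ∧ nrm x ≤ 1}
  /-- solidity: if `y` is in the space and `|x| ≤ |y|` pointwise then `x` is in the
  space with `‖x‖ ≤ ‖y‖` -/
  solid : ∀ x y, Mem y → (∀ n, ‖x n‖ ≤ ‖y n‖) →
    Mem x ∧ nrm x ≤ nrm y
  /-- there is a strictly positive weight `h` with `∑ |x n| h n ≤ ‖x‖` -/
  lower : ∃ h : ℕ → ℝ, (∀ n, 0 < h n) ∧ ∀ x, Mem x →
    (∑' n, ENNReal.ofReal (‖x n‖ * h n)) ≤ ENNReal.ofReal (nrm x)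
  /-- there is a strictly positive weight `k` with `‖x‖ ≤ sup_n |x n| k n` for every
  `x ∈ ℂ^ℕ` (with the convention `‖x‖ = ∞` outside the space) -/
  upper : ∃ k : ℕ → ℝ, (∀ n, 0 < k n) ∧ ∀ (x : ℕ → ℂ) (M : ℝ),
    (∀ n, ‖x n‖ * k n ≤ M) → Mem x ∧ nrm x ≤ M

/-- A centralizer on a Köthe sequence space `X`: a homogeneous map `Ω : X → ℂ^ℕ` such
that `‖Ω(ux) - uΩ(x)‖_X ≤ C ‖u‖_∞ ‖x‖_X` for all `x ∈ X` and bounded `u`. -/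
def IsCentralizer (X : KotheSequenceSpace) (Ω : (ℕ → ℂ) → (ℕ → ℂ)) : Prop :=
  (∀ (a : ℂ) (x : ℕ → ℂ), X.Mem x → Ω (a • x) = a • Ω x) ∧
  ∃ C : ℝ, 0 < C ∧ ∀ (x u : ℕ → ℂ) (M : ℝ), X.Mem x → 0 ≤ M →
    (∀ n, ‖u n‖ ≤ M) →
    X.Mem (Ω (u * x) - u * Ω x) ∧ X.nrm (Ω (u * x) - u * Ω x) ≤ C * M * X.nrm x

/-- A real centralizer: a centralizer sending real sequences to real sequences. -/
def IsRealCentralizer (X : KotheSequenceSpace) (Ω : (ℕ → ℂ) → (ℕ → ℂ)) : Prop :=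
  IsCentralizer X Ω ∧ ∀ x, X.Mem x → (∀ n, (x n).im = 0) → ∀ n, (Ω x n).im = 0

/-- A map `f : X → ℂ^ℕ` is bounded if `f x ∈ X` with `‖f x‖_X ≤ C ‖x‖_X` on `X`. -/
def IsBoundedMap (X : KotheSequenceSpace) (f : (ℕ → ℂ) → (ℕ → ℂ)) : Prop :=
  ∃ C : ℝ, 0 < C ∧ ∀ x, X.Mem x → X.Mem (f x) ∧ X.nrm (f x) ≤ C * X.nrm x

/-- Two centralizers are equivalent if their difference is a linear map plus a bounded
map. -/
def AreEquivalent (X : KotheSequenceSpace) (Ω Ψ : (ℕ → ℂ) → (ℕ → ℂ)) : Prop :=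
  ∃ L : (ℕ → ℂ) → (ℕ → ℂ),
    (∀ x y, X.Mem x → X.Mem y → L (x + y) = L x + L y) ∧
    (∀ (a : ℂ) (x), X.Mem x → L (a • x) = a • L x) ∧
    IsBoundedMap X (fun x => Ω x - Ψ x - L x)

/-- Boundedly equivalent: the difference itself is bounded. -/
def BoundedlyEquivalent (X : KotheSequenceSpace) (Ω Ψ : (ℕ → ℂ) → (ℕ → ℂ)) : Prop :=
  IsBoundedMap X (fun x => Ω x - Ψ x)

/-- Projectively equivalent: `Ω` is equivalent to `λΨ` for some `λ ≠ 0`. -/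
def ProjectivelyEquivalent (X : KotheSequenceSpace) (Ω Ψ : (ℕ → ℂ) → (ℕ → ℂ)) : Prop :=
  ∃ lam : ℂ, lam ≠ 0 ∧ AreEquivalent X Ω (fun x => lam • Ψ x)

/-- A centralizer is trivial if it is equivalent to `0`. -/
def IsTrivialCentralizer (X : KotheSequenceSpace) (Ω : (ℕ → ℂ) → (ℕ → ℂ)) : Prop :=
  AreEquivalent X Ω (fun _ => 0)

/-! A real centralizer `Ψ` commutes with coordinatewise conjugation up to a bounded map:
writing `x = u|x|` with `|u| ≤ 1`, both `Ψ(x̄) = Ψ(ū|x|)` and `Ψ(x) = Ψ(u|x|)` are within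
`C‖x‖` of `ūΨ(|x|)` and `uΨ(|x|)`, which are conjugate since `Ψ(|x|)` is real. Consequently,
if `Φ₁ + iΦ₂` is linear plus bounded for real centralizers `Φ₁, Φ₂`, then so is
`Φ₁ - iΦ₂`, which is its conjugate up to a bounded map, and hence so are `Φ₁` and `Φ₂`.

If `Ω ~ λΨ` with `Ψ` real, split `Ω₁ + iΩ₂ - λΨ = (Ω₁ - (Re λ)Ψ) + i(Ω₂ - (Im λ)Ψ)`:
both `Ω₁ ~ (Re λ)Ψ` and `Ω₂ ~ (Im λ)Ψ`, which gives one of the three alternatives according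
to which of `Re λ`, `Im λ` vanish. The converse is a direct computation. -/

namespace KotheSequenceSpace

variable (X : KotheSequenceSpace)

lemma nrm_zero : X.nrm 0 = 0 := by
  simpa using X.nrm_smul 0 0 X.zero_mem

lemma neg_mem {x : ℕ → ℂ} (hx : X.Mem x) : X.Mem (-x) := by
  simpa using X.smul_mem (-1) x hx

lemma nrm_neg {x : ℕ → ℂ} (hx : X.Mem x) : X.nrm (-x) = X.nrm x := by
  simpa using X.nrm_smul (-1) x hx

lemma sub_mem {x y : ℕ → ℂ} (hx : X.Mem x) (hy : X.Mem y) : X.Mem (x - y) := by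
  simpa [sub_eq_add_neg] using X.add_mem x (-y) hx (X.neg_mem hy)

lemma nrm_sub_le {x y : ℕ → ℂ} (hx : X.Mem x) (hy : X.Mem y) :
    X.nrm (x - y) ≤ X.nrm x + X.nrm y := by
  simpa [sub_eq_add_neg, X.nrm_neg hy] using X.nrm_add_le x (-y) hx (X.neg_mem hy)

lemma star_mem {x : ℕ → ℂ} (hx : X.Mem x) : X.Mem (star x) :=
  (X.solid (star x) x hx fun n => (norm_star (x n)).le).1

lemma nrm_star {x : ℕ → ℂ} (hx : X.Mem x) : X.nrm (star x) = X.nrm x := by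
  refine le_antisymm (X.solid (star x) x hx fun n => (norm_star (x n)).le).2 ?_
  simpa using (X.solid x (star x) (X.star_mem hx) fun n => (norm_star (x n)).ge).2

end KotheSequenceSpace

lemma exists_norm_le_one_mul_abs (x : ℕ → ℂ) :
    ∃ u : ℕ → ℂ, (∀ n, ‖u n‖ ≤ 1) ∧ x = u * fun n => (‖x n‖ : ℂ) := by
  refine ⟨fun n => Complex.exp ((x n).arg * Complex.I), fun n => ?_, ?_⟩
  · rw [Complex.norm_exp_ofReal_mul_I]
  · funext n
    simp only [Pi.mul_apply]
    rw [mul_comm, Complex.norm_mul_exp_arg_mul_I]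

section Maps

variable {X : KotheSequenceSpace} {f g : (ℕ → ℂ) → (ℕ → ℂ)}

def IsLinearOn (X : KotheSequenceSpace) (L : (ℕ → ℂ) → (ℕ → ℂ)) : Prop :=
  (∀ x y, X.Mem x → X.Mem y → L (x + y) = L x + L y) ∧
    ∀ (a : ℂ) (x), X.Mem x → L (a • x) = a • L x

namespace IsLinearOn

lemma zero : IsLinearOn X fun _ => 0 :=
  ⟨fun _ _ _ _ => (add_zero 0).symm, fun _ _ _ => (smul_zero _).symm⟩

lemma add (hf : IsLinearOn X f) (hg : IsLinearOn X g) : IsLinearOn X fun x => f x + g x :=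
  ⟨fun x y hx hy => by dsimp only; rw [hf.1 x y hx hy, hg.1 x y hx hy]; abel,
    fun a x hx => by dsimp only; rw [hf.2 a x hx, hg.2 a x hx, smul_add]⟩

lemma smul (c : ℂ) (hf : IsLinearOn X f) : IsLinearOn X fun x => c • f x :=
  ⟨fun x y hx hy => by dsimp only; rw [hf.1 x y hx hy, smul_add],
    fun a x hx => by dsimp only; rw [hf.2 a x hx, smul_comm]⟩

lemma star (hf : IsLinearOn X f) : IsLinearOn X fun x => star (f (star x)) :=
  ⟨fun x y hx hy => by
    dsimp only; rw [star_add, hf.1 _ _ (X.star_mem hx) (X.star_mem hy), star_add],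
    fun a x hx => by dsimp only; rw [star_smul, hf.2 _ _ (X.star_mem hx), star_smul, star_star]⟩

end IsLinearOn

namespace IsBoundedMap

lemma add (hf : IsBoundedMap X f) (hg : IsBoundedMap X g) :
    IsBoundedMap X fun x => f x + g x := by
  obtain ⟨C, hC, hf⟩ := hf
  obtain ⟨D, hD, hg⟩ := hg
  refine ⟨C + D, add_pos hC hD, fun x hx => ⟨X.add_mem _ _ (hf x hx).1 (hg x hx).1, ?_⟩⟩
  calc X.nrm (f x + g x) ≤ X.nrm (f x) + X.nrm (g x) :=
        X.nrm_add_le _ _ (hf x hx).1 (hg x hx).1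
    _ ≤ C * X.nrm x + D * X.nrm x := add_le_add (hf x hx).2 (hg x hx).2
    _ = (C + D) * X.nrm x := by ring

lemma smul (c : ℂ) (hf : IsBoundedMap X f) : IsBoundedMap X fun x => c • f x := by
  obtain ⟨C, hC, hf⟩ := hf
  refine ⟨(‖c‖ + 1) * C, by positivity, fun x hx => ⟨X.smul_mem c _ (hf x hx).1, ?_⟩⟩
  calc X.nrm (c • f x) = ‖c‖ * X.nrm (f x) := X.nrm_smul c _ (hf x hx).1
    _ ≤ (‖c‖ + 1) * (C * X.nrm x) :=
        mul_le_mul (by linarith) (hf x hx).2 (X.nrm_nonneg _ (hf x hx).1) (by positivity)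
    _ = (‖c‖ + 1) * C * X.nrm x := by ring

lemma star (hf : IsBoundedMap X f) : IsBoundedMap X fun x => star (f (star x)) := by
  obtain ⟨C, hC, hf⟩ := hf
  refine ⟨C, hC, fun x hx => ?_⟩
  obtain ⟨hmem, hle⟩ := hf _ (X.star_mem hx)
  exact ⟨X.star_mem hmem, by rwa [X.nrm_star hmem, ← X.nrm_star hx]⟩

end IsBoundedMap

def IsLinearPlusBounded (X : KotheSequenceSpace) (f : (ℕ → ℂ) → (ℕ → ℂ)) : Prop :=
  ∃ L, IsLinearOn X L ∧ IsBoundedMap X fun x => f x - L x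

lemma areEquivalent_iff {Ω Ψ : (ℕ → ℂ) → (ℕ → ℂ)} :
    AreEquivalent X Ω Ψ ↔ IsLinearPlusBounded X fun x => Ω x - Ψ x :=
  exists_congr fun _ => and_assoc.symm

lemma isTrivialCentralizer_iff {Ω : (ℕ → ℂ) → (ℕ → ℂ)} :
    IsTrivialCentralizer X Ω ↔ IsLinearPlusBounded X Ω := by
  simp only [IsTrivialCentralizer, areEquivalent_iff, sub_zero]

namespace IsLinearPlusBounded

lemma of_isBoundedMap (hf : IsBoundedMap X f) : IsLinearPlusBounded X f :=
  ⟨_, IsLinearOn.zero, by simpa using hf⟩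

lemma add (hf : IsLinearPlusBounded X f) (hg : IsLinearPlusBounded X g) :
    IsLinearPlusBounded X fun x => f x + g x := by
  obtain ⟨L, hL, hfL⟩ := hf
  obtain ⟨M, hM, hgM⟩ := hg
  refine ⟨_, hL.add hM, ?_⟩
  convert hfL.add hgM using 2 with x
  module

lemma smul (c : ℂ) (hf : IsLinearPlusBounded X f) :
    IsLinearPlusBounded X fun x => c • f x := by
  obtain ⟨L, hL, hfL⟩ := hf
  refine ⟨_, hL.smul c, ?_⟩
  convert hfL.smul c using 2 with x
  rw [smul_sub]

lemma sub (hf : IsLinearPlusBounded X f) (hg : IsLinearPlusBounded X g) :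
    IsLinearPlusBounded X fun x => f x - g x := by
  convert hf.add (hg.smul (-1)) using 2 with x
  module

lemma star (hf : IsLinearPlusBounded X f) :
    IsLinearPlusBounded X fun x => star (f (star x)) := by
  obtain ⟨L, hL, hfL⟩ := hf
  refine ⟨_, hL.star, ?_⟩
  convert hfL.star using 2 with x
  rw [star_sub]

lemma left_or_right_or_sub_smul {Φ₁ Φ₂ Ψ : (ℕ → ℂ) → (ℕ → ℂ)} {a b : ℂ}
    (h₁ : IsLinearPlusBounded X fun x => Φ₁ x - a • Ψ x)
    (h₂ : IsLinearPlusBounded X fun x => Φ₂ x - b • Ψ x) :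
    IsLinearPlusBounded X Φ₁ ∨ IsLinearPlusBounded X Φ₂ ∨
      ∃ c : ℂ, c ≠ 0 ∧ IsLinearPlusBounded X fun x => Φ₁ x - c • Φ₂ x := by
  rcases eq_or_ne b 0 with hb | hb
  · exact Or.inr (Or.inl (by simpa [hb] using h₂))
  rcases eq_or_ne a 0 with ha | ha
  · exact Or.inl (by simpa [ha] using h₁)
  refine Or.inr (Or.inr ⟨a / b, div_ne_zero ha hb, ?_⟩)
  convert ((h₁.smul b).sub (h₂.smul a)).smul b⁻¹ using 2 with x
  linear_combination (norm := module) -((inv_mul_cancel₀ hb) • Φ₁ x)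

end IsLinearPlusBounded

def IsAlmostReal (X : KotheSequenceSpace) (f : (ℕ → ℂ) → (ℕ → ℂ)) : Prop :=
  IsBoundedMap X fun x => star (f (star x)) - f x

namespace IsAlmostReal

lemma sub (hf : IsAlmostReal X f) (hg : IsAlmostReal X g) :
    IsAlmostReal X fun x => f x - g x := by
  unfold IsAlmostReal at *
  convert hf.add (hg.smul (-1)) using 2 with x
  rw [star_sub]
  module

lemma ofReal_smul (r : ℝ) (hf : IsAlmostReal X f) :
    IsAlmostReal X fun x => (r : ℂ) • f x := by
  unfold IsAlmostReal at *
  convert hf.smul (r : ℂ) using 2 with x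
  rw [star_smul, smul_sub, Complex.star_def, Complex.conj_ofReal]

lemma isLinearPlusBounded_of_add_I_smul {f₁ f₂ : (ℕ → ℂ) → (ℕ → ℂ)}
    (h₁ : IsAlmostReal X f₁) (h₂ : IsAlmostReal X f₂)
    (h : IsLinearPlusBounded X fun x => f₁ x + Complex.I • f₂ x) :
    IsLinearPlusBounded X f₁ ∧ IsLinearPlusBounded X f₂ := by
  have hconj : IsLinearPlusBounded X fun x => f₁ x - Complex.I • f₂ x := by
    convert (h.star.sub (.of_isBoundedMap h₁)).add
      (.of_isBoundedMap (h₂.smul Complex.I)) using 2 with x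
    rw [star_add, star_smul, Complex.star_def, Complex.conj_I]
    module
  have hf₁ : IsLinearPlusBounded X f₁ := by
    convert (h.add hconj).smul 2⁻¹ using 2 with x
    module
  refine ⟨hf₁, ?_⟩
  convert (h.sub hf₁).smul (-Complex.I) using 2 with x
  linear_combination (norm := module) Complex.I_mul_I • f₂ x

end IsAlmostReal

end Maps

lemma IsRealCentralizer.isAlmostReal {X : KotheSequenceSpace} {Ψ : (ℕ → ℂ) → (ℕ → ℂ)}
    (hΨ : IsRealCentralizer X Ψ) : IsAlmostReal X Ψ := by
  obtain ⟨⟨-, C, hC, hcomm⟩, hreal⟩ := hΨ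
  refine ⟨2 * C, by positivity, fun x hx => ?_⟩
  obtain ⟨u, hu, hxu⟩ := exists_norm_le_one_mul_abs x
  set a : ℕ → ℂ := fun n => (‖x n‖ : ℂ)
  obtain ⟨ha, hax⟩ : X.Mem a ∧ X.nrm a ≤ X.nrm x := X.solid a x hx fun n => by simp [a]
  have hΨa : star (Ψ a) = Ψ a := funext fun n =>
    Complex.conj_eq_iff_im.mpr (hreal a ha (fun n => Complex.ofReal_im _) n)
  have hstar_a : star a = a := funext fun n => Complex.conj_ofReal _
  have hcomm' : ∀ v : ℕ → ℂ, (∀ n, ‖v n‖ ≤ 1) →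
      X.Mem (Ψ (v * a) - v * Ψ a) ∧ X.nrm (Ψ (v * a) - v * Ψ a) ≤ C * X.nrm x := by
    intro v hv
    obtain ⟨hmem, hle⟩ := hcomm a v 1 ha zero_le_one hv
    exact ⟨hmem, hle.trans (by rw [mul_one]; exact mul_le_mul_of_nonneg_left hax hC.le)⟩
  obtain ⟨hm₁, hn₁⟩ := hcomm' (star u) fun n => (norm_star (u n)).trans_le (hu n)
  obtain ⟨hm₂, hn₂⟩ := hcomm' u hu
  have key : star (Ψ (star x)) - Ψ x =
      star (Ψ (star u * a) - star u * Ψ a) - (Ψ (u * a) - u * Ψ a) := by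
    rw [hxu, star_mul', hstar_a, star_sub, star_mul', star_star, hΨa]
    ring
  dsimp only
  rw [key]
  refine ⟨X.sub_mem (X.star_mem hm₁) hm₂, ?_⟩
  calc _ ≤ X.nrm (star (Ψ (star u * a) - star u * Ψ a)) + X.nrm (Ψ (u * a) - u * Ψ a) :=
        X.nrm_sub_le (X.star_mem hm₁) hm₂
    _ ≤ C * X.nrm x + C * X.nrm x := by rw [X.nrm_star hm₁]; exact add_le_add hn₁ hn₂
    _ = 2 * C * X.nrm x := by ring

lemma IsRealCentralizer.isLinearPlusBounded_sub_re_smul_and_sub_im_smul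
    {X : KotheSequenceSpace} {Φ₁ Φ₂ Ψ : (ℕ → ℂ) → (ℕ → ℂ)} (h₁ : IsRealCentralizer X Φ₁)
    (h₂ : IsRealCentralizer X Φ₂) (hΨ : IsRealCentralizer X Ψ) (lam : ℂ)
    (h : IsLinearPlusBounded X fun x => Φ₁ x + Complex.I • Φ₂ x - lam • Ψ x) :
    (IsLinearPlusBounded X fun x => Φ₁ x - (lam.re : ℂ) • Ψ x) ∧
      IsLinearPlusBounded X fun x => Φ₂ x - (lam.im : ℂ) • Ψ x := by
  refine IsAlmostReal.isLinearPlusBounded_of_add_I_smul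
    (h₁.isAlmostReal.sub (hΨ.isAlmostReal.ofReal_smul _))
    (h₂.isAlmostReal.sub (hΨ.isAlmostReal.ofReal_smul _)) ?_
  convert h using 2 with x
  conv_rhs => rw [← Complex.re_add_im lam]
  module

lemma isRealCentralizer_zero (X : KotheSequenceSpace) : IsRealCentralizer X fun _ => 0 := by
  refine ⟨⟨fun a _ _ => (smul_zero a).symm, 1, one_pos, fun x u M hx hM _ => ?_⟩,
    fun _ _ _ _ => rfl⟩
  simp only [mul_zero, sub_zero]
  exact ⟨X.zero_mem, by rw [X.nrm_zero]; exact mul_nonneg (by linarith) (X.nrm_nonneg x hx)⟩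

theorem statement0_general (X : KotheSequenceSpace) (Ω Ω₁ Ω₂ : (ℕ → ℂ) → (ℕ → ℂ))
    (h1 : IsRealCentralizer X Ω₁) (h2 : IsRealCentralizer X Ω₂)
    (hbe : BoundedlyEquivalent X Ω (fun x => Ω₁ x + Complex.I • Ω₂ x)) :
    (∃ Ψ, IsRealCentralizer X Ψ ∧ ProjectivelyEquivalent X Ω Ψ) ↔
      (IsTrivialCentralizer X Ω₁ ∨ IsTrivialCentralizer X Ω₂ ∨
        ProjectivelyEquivalent X Ω₁ Ω₂) := by
  have hbe' := IsLinearPlusBounded.of_isBoundedMap hbe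
  simp only [isTrivialCentralizer_iff, ProjectivelyEquivalent, areEquivalent_iff]
  constructor
  · rintro ⟨Ψ, hΨ, lam, -, hequiv⟩
    obtain ⟨hΩ₁, hΩ₂⟩ :=
        h1.isLinearPlusBounded_sub_re_smul_and_sub_im_smul h2 hΨ lam <| by
      convert (hbe'.smul (-1)).add hequiv using 2 with x
      module
    exact hΩ₁.left_or_right_or_sub_smul hΩ₂
  · rintro (hΩ₁ | hΩ₂ | ⟨μ, -, hequiv⟩)
    · refine ⟨Ω₂, h2, Complex.I, Complex.I_ne_zero, ?_⟩
      convert hbe'.add hΩ₁ using 2 with x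
      module
    · refine ⟨Ω₁, h1, 1, one_ne_zero, ?_⟩
      convert hbe'.add (hΩ₂.smul Complex.I) using 2 with x
      module
    have hΩ : IsLinearPlusBounded X fun x => Ω x - (μ + Complex.I) • Ω₂ x := by
      convert hbe'.add hequiv using 2 with x
      module
    rcases eq_or_ne (μ + Complex.I) 0 with hμ | hμ
    -- then `Ω` itself is trivial and `Ψ = 0` will do
    · exact ⟨_, isRealCentralizer_zero X, 1, one_ne_zero, by simpa [hμ] using hΩ⟩
    · exact ⟨Ω₂, h2, μ + Complex.I, hμ, hΩ⟩

/-- Lemma 3.1 of the paper: a centralizer boundedly equivalent to `Ω₁ + iΩ₂` with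
`Ω₁, Ω₂` real centralizers is projectively equivalent to a real centralizer iff `Ω₁`
is trivial, or `Ω₂` is trivial, or `Ω₁` and `Ω₂` are projectively equivalent. -/
theorem statement0 (X : KotheSequenceSpace) (Ω Ω₁ Ω₂ : (ℕ → ℂ) → (ℕ → ℂ))
    (hΩ : IsCentralizer X Ω) (h1 : IsRealCentralizer X Ω₁) (h2 : IsRealCentralizer X Ω₂)
    (hbe : BoundedlyEquivalent X Ω (fun x => Ω₁ x + Complex.I • Ω₂ x)) :
    (∃ Ψ, IsRealCentralizer X Ψ ∧ ProjectivelyEquivalent X Ω Ψ) ↔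
      (IsTrivialCentralizer X Ω₁ ∨ IsTrivialCentralizer X Ω₂ ∨
        ProjectivelyEquivalent X Ω₁ Ω₂) :=
  statement0_general X Ω Ω₁ Ω₂ h1 h2 hbe
end
end

section
/- Let μ be a probability measure on a measurable space S, let f, g : S → (0,∞) be measurable functions with log f and log g integrable, and let α ∈ [0,1]. Then α·exp(∫_S log f dμ) + (1−α)·exp(∫_S log g dμ) ≤ exp(∫_S log(α f + (1−α) g) dμ). -/
/-!
Put `h = α f + (1 - α) g`. By Jensen's inequality for `exp`,
`exp (∫ log f - ∫ log h) ≤ ∫ f / h` and `exp (∫ log g - ∫ log h) ≤ ∫ g / h`; the convex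
combination of the right-hand sides is `∫ h / h = 1`, and multiplying by `exp (∫ log h)` gives
the claim. Integrability comes for free: concavity of `log` gives
`|log h| ≤ |log f| + |log g|`, and for `0 < α < 1` the ratios are bounded, `f / h ≤ α⁻¹` and
`g / h ≤ (1 - α)⁻¹`.
-/

open MeasureTheory Real

lemma abs_log_convex_comb_le {x y α : ℝ} (hx : 0 < x) (hy : 0 < y) (hα : α ∈ Set.Icc (0 : ℝ) 1) :
    |log (α * x + (1 - α) * y)| ≤ |log x| + |log y| := by
  obtain ⟨hα0, hα1⟩ := hα
  have lower : α * log x + (1 - α) * log y ≤ log (α * x + (1 - α) * y) :=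
    strictConcaveOn_log_Ioi.concaveOn.2 hx hy hα0 (by linarith) (by ring)
  have upper : log (α * x + (1 - α) * y) ≤ log (max x y) := by
    refine log_le_log ?_ ?_
    · nlinarith [mul_nonneg hα0 hx.le, mul_nonneg (sub_nonneg.2 hα1) hy.le]
    · nlinarith [le_max_left x y, le_max_right x y]
  rw [abs_le]
  constructor
  · nlinarith [neg_abs_le (log x), neg_abs_le (log y), abs_nonneg (log x), abs_nonneg (log y)]
  · rcases max_choice x y with hmax | hmax <;> rw [hmax] at upper <;>
      linarith [le_abs_self (log x), le_abs_self (log y), abs_nonneg (log x), abs_nonneg (log y)]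

lemma log_sub_log_le_neg_log_of_mul_le {a x z : ℝ} (ha : 0 < a) (hx : 0 < x) (hz : a * x ≤ z) :
    log x - log z ≤ -log a := by
  have := log_le_log (mul_pos ha hx) hz
  rw [log_mul ha.ne' hx.ne'] at this
  linarith

section

variable {S : Type*} [MeasurableSpace S] {μ : Measure S}

lemma exp_integral_le_integral_exp [IsProbabilityMeasure μ] {φ : S → ℝ} (hφ : Integrable φ μ)
    (hexp : Integrable (fun s => exp (φ s)) μ) :
    exp (∫ s, φ s ∂μ) ≤ ∫ s, exp (φ s) ∂μ :=
  convexOn_exp.map_integral_le continuous_exp.continuousOn isClosed_univ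
    (.of_forall fun _ => Set.mem_univ _) hφ hexp

lemma integrable_exp_of_ae_le [IsFiniteMeasure μ] {φ : S → ℝ} (hφ : AEStronglyMeasurable φ μ)
    {C : ℝ} (hC : ∀ᵐ s ∂μ, φ s ≤ C) : Integrable (fun s => exp (φ s)) μ :=
  .of_bound (continuous_exp.comp_aestronglyMeasurable hφ) (exp C) <| hC.mono fun s hs => by
    rw [norm_of_nonneg (exp_pos _).le]
    exact exp_le_exp.2 hs

lemma aestronglyMeasurable_of_integrable_log {f : S → ℝ} (hpos : ∀ s, 0 < f s)
    (hlog : Integrable (fun s => log (f s)) μ) : AEStronglyMeasurable f μ := by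
  simpa only [Function.comp_def, exp_log (hpos _)] using
    continuous_exp.comp_aestronglyMeasurable hlog.aestronglyMeasurable

lemma integrable_log_convex_comb {f g : S → ℝ}
    (hfpos : ∀ s, 0 < f s) (hgpos : ∀ s, 0 < g s)
    (hlf : Integrable (fun s => log (f s)) μ) (hlg : Integrable (fun s => log (g s)) μ)
    {α : ℝ} (hα : α ∈ Set.Icc (0 : ℝ) 1) :
    Integrable (fun s => log (α * f s + (1 - α) * g s)) μ := by
  have hmeas : AEStronglyMeasurable (fun s => log (α * f s + (1 - α) * g s)) μ :=
    ((((aestronglyMeasurable_of_integrable_log hfpos hlf).const_mul α).add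
      ((aestronglyMeasurable_of_integrable_log hgpos hlg).const_mul (1 - α))).aemeasurable.log
      ).aestronglyMeasurable
  refine (hlf.abs.add hlg.abs).mono' hmeas (.of_forall fun s => ?_)
  exact (norm_eq_abs _).trans_le (abs_log_convex_comb_le (hfpos s) (hgpos s) hα)

lemma add_mul_exp_integral_log_le_of_mem_Ioo [IsProbabilityMeasure μ] {f g : S → ℝ}
    (hfpos : ∀ s, 0 < f s) (hgpos : ∀ s, 0 < g s)
    (hlf : Integrable (fun s => log (f s)) μ) (hlg : Integrable (fun s => log (g s)) μ)
    {α : ℝ} (hα : α ∈ Set.Ioo (0 : ℝ) 1) :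
    α * exp (∫ s, log (f s) ∂μ) + (1 - α) * exp (∫ s, log (g s) ∂μ)
      ≤ exp (∫ s, log (α * f s + (1 - α) * g s) ∂μ) := by
  obtain ⟨hα0, hα1⟩ := hα
  set h : S → ℝ := fun s => α * f s + (1 - α) * g s
  have hhpos (s : S) : 0 < h s := by have := hfpos s; have := hgpos s; positivity
  have hlh : Integrable (fun s => log (h s)) μ :=
    integrable_log_convex_comb hfpos hgpos hlf hlg ⟨hα0.le, hα1.le⟩
  have hf_le (s : S) : log (f s) - log (h s) ≤ -log α :=
    log_sub_log_le_neg_log_of_mul_le hα0 (hfpos s) (by nlinarith [hgpos s])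
  have hg_le (s : S) : log (g s) - log (h s) ≤ -log (1 - α) :=
    log_sub_log_le_neg_log_of_mul_le (by linarith) (hgpos s) (by nlinarith [hfpos s])
  have hf_int : Integrable (fun s => exp (log (f s) - log (h s))) μ :=
    integrable_exp_of_ae_le (hlf.sub hlh).1 (.of_forall hf_le)
  have hg_int : Integrable (fun s => exp (log (g s) - log (h s))) μ :=
    integrable_exp_of_ae_le (hlg.sub hlh).1 (.of_forall hg_le)
  have hsum (s : S) :
      α * exp (log (f s) - log (h s)) + (1 - α) * exp (log (g s) - log (h s)) = 1 := by
    rw [exp_sub, exp_sub, exp_log (hfpos s), exp_log (hgpos s), exp_log (hhpos s)]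
    field_simp [(hhpos s).ne']
    rfl
  calc α * exp (∫ s, log (f s) ∂μ) + (1 - α) * exp (∫ s, log (g s) ∂μ)
      = (α * exp (∫ s, log (f s) - log (h s) ∂μ)
          + (1 - α) * exp (∫ s, log (g s) - log (h s) ∂μ)) * exp (∫ s, log (h s) ∂μ) := by
        rw [integral_sub hlf hlh, integral_sub hlg hlh, exp_sub, exp_sub]
        field_simp
    _ ≤ (α * ∫ s, exp (log (f s) - log (h s)) ∂μ
          + (1 - α) * ∫ s, exp (log (g s) - log (h s)) ∂μ) * exp (∫ s, log (h s) ∂μ) := by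
        gcongr
        · exact exp_integral_le_integral_exp (hlf.sub hlh) hf_int
        · exact exp_integral_le_integral_exp (hlg.sub hlh) hg_int
    _ = exp (∫ s, log (h s) ∂μ) := by
        rw [← integral_const_mul, ← integral_const_mul,
          ← integral_add (hf_int.const_mul α) (hg_int.const_mul (1 - α))]
        simp only [hsum, integral_const, probReal_univ, smul_eq_mul, one_mul]

end

theorem statement1_general {S : Type*} [MeasurableSpace S] (μ : Measure S)
    [IsProbabilityMeasure μ] (f g : S → ℝ)
    (hfpos : ∀ s, 0 < f s) (hgpos : ∀ s, 0 < g s)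
    (hlf : Integrable (fun s => Real.log (f s)) μ)
    (hlg : Integrable (fun s => Real.log (g s)) μ)
    (α : ℝ) (hα : α ∈ Set.Icc (0 : ℝ) 1) :
    α * Real.exp (∫ s, Real.log (f s) ∂μ) + (1 - α) * Real.exp (∫ s, Real.log (g s) ∂μ)
      ≤ Real.exp (∫ s, Real.log (α * f s + (1 - α) * g s) ∂μ) := by
  rcases hα.1.eq_or_lt with rfl | hα0
  · simp
  rcases hα.2.eq_or_lt with rfl | hα1
  · simp
  exact add_mul_exp_integral_log_le_of_mem_Ioo hfpos hgpos hlf hlg ⟨hα0, hα1⟩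

/-- The geometric-mean functional `f ↦ exp(∫ log f dμ)` is concave (superadditive for
convex combinations) on positive functions with integrable logarithm, for a probability
measure `μ`. -/
theorem statement1 {S : Type*} [MeasurableSpace S] (μ : Measure S)
    [IsProbabilityMeasure μ] (f g : S → ℝ) (hf : Measurable f) (hg : Measurable g)
    (hfpos : ∀ s, 0 < f s) (hgpos : ∀ s, 0 < g s)
    (hlf : Integrable (fun s => Real.log (f s)) μ)
    (hlg : Integrable (fun s => Real.log (g s)) μ)
    (α : ℝ) (hα : α ∈ Set.Icc (0 : ℝ) 1) :
    α * Real.exp (∫ s, Real.log (f s) ∂μ) + (1 - α) * Real.exp (∫ s, Real.log (g s) ∂μ)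
      ≤ Real.exp (∫ s, Real.log (α * f s + (1 - α) * g s) ∂μ) :=
  statement1_general μ f g hfpos hgpos hlf hlg α hα
end

section
/- Let {φ_w}_{w∈𝕋} be a family of nondegenerate Orlicz functions such that w ↦ φ_w(t) is Borel for every t ≥ 0, and suppose there is t₀ > 0 such that for every t ∈ (0,t₀) the function w ↦ log φ_w^{-1}(t) is integrable on 𝕋 (with respect to normalized Haar measure). Fix z = re^{iθ} in the open unit disk and define I_z(t) = exp((1/2π)∫_{−π}^{π} P(r, θ−s) · log φ_{e^{is}}^{-1}(t) ds) for t ≥ 0, with the conventions log 0 = −∞ and exp(−∞) = 0. Then (1) I_z(0) = 0, and (2) there exists t' with 0 < t' ≤ t₀ such that I_z is concave and strictly increasing on [0, t'). -/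
/-!
For `t > 0`, `I_z(t) = exp (∫ log φ_w⁻¹(t) dμ(w))` is a geometric mean with respect to the
harmonic measure `dμ = P(r, θ - s) ds / 2π` of `z`, a probability measure. As each `φ_w` is convex,
continuous on `[0, ∞)` and vanishes at `0`, each `φ_w⁻¹` is concave, positive and strictly
increasing on `(0, ∞)`. For a probability measure the geometric mean `G` is strictly monotone and
satisfies `c₁ G(f₁) + c₂ G(f₂) ≤ G(h)` whenever `c₁ f₁ + c₂ f₂ ≤ h`: by Jensen's inequality for
`exp`, `cᵢ G(fᵢ) / G(h) = G(cᵢ fᵢ / h) ≤ ∫ cᵢ fᵢ / h`, and the two integrals add up to at most `1`.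
Applied to `h = φ_w⁻¹(a x + b y) ≥ a φ_w⁻¹(x) + b φ_w⁻¹(y)` this is concavity of `I_z` on
`(0, t₀)`, and the value `I_z(0) = 0` keeps it concave on `[0, t₀)` since `c I_z(t) ≤ I_z(c t)`.
-/

open MeasureTheory Real Set Filter
open scoped ENNReal

noncomputable section

def IsOrliczFunction (φ : ℝ → ℝ) : Prop :=
  ConvexOn ℝ (Set.Ici 0) φ ∧ MonotoneOn φ (Set.Ici 0) ∧ φ 0 = 0 ∧
    (∀ t, 0 ≤ t → 0 ≤ φ t) ∧ Filter.Tendsto φ Filter.atTop Filter.atTop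

def IsNondegenerate (φ : ℝ → ℝ) : Prop := ∀ t, 0 < t → 0 < φ t

def ginv (φ : ℝ → ℝ) (s : ℝ) : ℝ := sSup {t : ℝ | 0 ≤ t ∧ φ t ≤ s}

def poissonKernelRT (r t : ℝ) : ℝ := (1 - r ^ 2) / (1 - 2 * r * Real.cos t + r ^ 2)

open Topology
open scoped NNReal

section PoissonKernel

variable {r : ℝ}

lemma poissonKernelRT_denom_pos (hr0 : 0 ≤ r) (hr1 : r < 1) (t : ℝ) :
    0 < 1 - 2 * r * Real.cos t + r ^ 2 := by
  nlinarith [Real.cos_le_one t, sq_nonneg (1 - r)]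

lemma poissonKernelRT_pos (hr0 : 0 ≤ r) (hr1 : r < 1) (t : ℝ) : 0 < poissonKernelRT r t :=
  div_pos (by nlinarith) (poissonKernelRT_denom_pos hr0 hr1 t)

lemma continuous_poissonKernelRT (hr0 : 0 ≤ r) (hr1 : r < 1) : Continuous (poissonKernelRT r) :=
  continuous_const.div (by fun_prop) fun t => (poissonKernelRT_denom_pos hr0 hr1 t).ne'

lemma poissonKernel_circleMap (hr : 0 ≤ r) (θ s : ℝ) :
    poissonKernel 0 (circleMap 0 r θ) (circleMap 0 1 s) = poissonKernelRT r (θ - s) := by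
  have hnorm : ‖circleMap 0 1 s - circleMap 0 r θ‖ ^ 2 = 1 - 2 * r * cos (θ - s) + r ^ 2 := by
    rw [circleMap_zero, circleMap_zero, ← Complex.normSq_eq_norm_sq, Complex.normSq_apply]
    simp only [Complex.sub_re, Complex.sub_im, Complex.re_ofReal_mul, Complex.im_ofReal_mul,
      Complex.exp_ofReal_mul_I_re, Complex.exp_ofReal_mul_I_im, cos_sub]
    nlinarith [sin_sq_add_cos_sq s, sin_sq_add_cos_sq θ]
  simp [poissonKernel, poissonKernelRT, hnorm, abs_of_nonneg hr]

lemma integral_poissonKernelRT (hr0 : 0 ≤ r) (hr1 : r < 1) (θ : ℝ) :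
    ∫ s in (-π)..π, poissonKernelRT r (θ - s) = 2 * π := by
  have hmean := (InnerProductSpace.harmonicOnNhd_const (1 : ℝ)).circleAverage_poissonKernel_smul
    (c := (0 : ℂ)) (R := 1) (w := circleMap 0 r θ) (by simp [abs_of_nonneg hr0, hr1])
  have hper : Function.Periodic (fun s => poissonKernelRT r (θ - s)) (2 * π) := fun s => by
    simp [poissonKernelRT, sub_add_eq_sub_sub, Real.cos_sub_two_pi]
  simp only [Real.circleAverage_def, smul_eq_mul, Pi.mul_apply, mul_one,
    poissonKernel_circleMap hr0] at hmean
  have hshift := hper.intervalIntegral_add_eq (-π) 0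
  rw [show -π + 2 * π = π by ring, zero_add] at hshift
  rw [hshift]
  field_simp at hmean
  linarith

def poissonDensity (r θ s : ℝ) : ℝ≥0 := (poissonKernelRT r (θ - s) / (2 * π)).toNNReal

/-- The harmonic measure of the unit disc at `r e^{iθ}`, as a measure on the angle in `(-π, π]`. -/
def poissonMeasure (r θ : ℝ) : Measure ℝ :=
  (volume.restrict (Ioc (-π) π)).withDensity fun s => poissonDensity r θ s

variable {θ : ℝ}

lemma continuous_poissonKernelRT_sub_div (hr0 : 0 ≤ r) (hr1 : r < 1) :
    Continuous fun s => poissonKernelRT r (θ - s) / (2 * π) :=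
  ((continuous_poissonKernelRT hr0 hr1).comp (continuous_sub_left θ)).div_const _

lemma measurable_poissonDensity (hr0 : 0 ≤ r) (hr1 : r < 1) : Measurable (poissonDensity r θ) :=
  (continuous_poissonKernelRT_sub_div hr0 hr1).measurable.real_toNNReal

lemma coe_poissonDensity (hr0 : 0 ≤ r) (hr1 : r < 1) (s : ℝ) :
    (poissonDensity r θ s : ℝ) = poissonKernelRT r (θ - s) / (2 * π) :=
  Real.coe_toNNReal _ (div_nonneg (poissonKernelRT_pos hr0 hr1 _).le (by positivity))

lemma integral_poissonMeasure (hr0 : 0 ≤ r) (hr1 : r < 1) (f : ℝ → ℝ) :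
    ∫ s, f s ∂poissonMeasure r θ =
      1 / (2 * π) * ∫ s in (-π)..π, poissonKernelRT r (θ - s) * f s := by
  rw [poissonMeasure, integral_withDensity_eq_integral_smul (measurable_poissonDensity hr0 hr1),
    intervalIntegral.integral_of_le (by linarith [pi_pos]), ← integral_const_mul]
  congr 1 with s
  rw [NNReal.smul_def, smul_eq_mul, coe_poissonDensity hr0 hr1]
  ring

lemma isProbabilityMeasure_poissonMeasure (hr0 : 0 ≤ r) (hr1 : r < 1) :
    IsProbabilityMeasure (poissonMeasure r θ) := by
  have h := integral_poissonMeasure (θ := θ) hr0 hr1 fun _ => 1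
  simp only [mul_one, integral_poissonKernelRT hr0 hr1, integral_const, smul_eq_mul] at h
  rw [one_div, inv_mul_cancel₀ (by positivity), measureReal_def, ENNReal.toReal_eq_one_iff] at h
  exact ⟨h⟩

lemma IntervalIntegrable.integrable_poissonMeasure (hr0 : 0 ≤ r) (hr1 : r < 1) {f : ℝ → ℝ}
    (hf : IntervalIntegrable f volume (-π) π) : Integrable f (poissonMeasure r θ) := by
  rw [poissonMeasure,
    integrable_withDensity_iff_integrable_smul (measurable_poissonDensity hr0 hr1)]
  have hW :=
    (continuous_poissonKernelRT_sub_div (θ := θ) hr0 hr1).continuousOn (s := uIcc (-π) π)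
  refine ((intervalIntegrable_iff_integrableOn_Ioc_of_le (by linarith [pi_pos])).1
    (hf.continuousOn_mul hW)).congr (Eventually.of_forall fun s => ?_)
  simp only [NNReal.smul_def, smul_eq_mul, coe_poissonDensity hr0 hr1]

end PoissonKernel

namespace IsOrliczFunction

variable {φ : ℝ → ℝ} (hφ : IsOrliczFunction φ)
include hφ

lemma le_mul_apply_one {x : ℝ} (hx : x ∈ Icc (0 : ℝ) 1) : φ x ≤ x * φ 1 := by
  have h := hφ.1.2 (mem_Ici.2 zero_le_one) (mem_Ici.2 le_rfl) hx.1 (sub_nonneg.2 hx.2)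
    (add_sub_cancel x 1)
  simpa [hφ.2.2.1] using h

lemma continuousOn : ContinuousOn φ (Ici 0) := by
  intro p hp
  rcases (mem_Ici.1 hp).eq_or_lt with rfl | hp0
  · have hbound : Tendsto (fun x : ℝ => x * φ 1) (𝓝[Ici 0] 0) (𝓝 0) := by
      simpa using ((continuous_mul_const (φ 1)).tendsto 0).mono_left nhdsWithin_le_nhds
    rw [ContinuousWithinAt, hφ.2.2.1]
    refine tendsto_of_tendsto_of_tendsto_of_le_of_le' tendsto_const_nhds hbound ?_ ?_
    · filter_upwards [self_mem_nhdsWithin] with x hx using hφ.2.2.2.1 x hx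
    · filter_upwards [Icc_mem_nhdsGE one_pos] with x hx using hφ.le_mul_apply_one hx
  · exact ((hφ.1.subset Ioi_subset_Ici_self (convex_Ioi 0)).continuousOn isOpen_Ioi).continuousAt
      (Ioi_mem_nhds hp0) |>.continuousWithinAt

lemma bddAbove_sublevel (s : ℝ) : BddAbove {t : ℝ | 0 ≤ t ∧ φ t ≤ s} := by
  obtain ⟨T, hT⟩ := eventually_atTop.1 (hφ.2.2.2.2.eventually_gt_atTop s)
  exact ⟨T, fun t ht => not_lt.1 fun hTt => (hT t hTt.le).not_ge ht.2⟩

lemma le_ginv {s t : ℝ} (ht : 0 ≤ t) (hts : φ t ≤ s) : t ≤ ginv φ s :=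
  le_csSup (hφ.bddAbove_sublevel s) ⟨ht, hts⟩

lemma ginv_nonneg {s : ℝ} (hs : 0 ≤ s) : 0 ≤ ginv φ s :=
  hφ.le_ginv le_rfl (hφ.2.2.1.symm ▸ hs)

lemma apply_ginv_le {s : ℝ} (hs : 0 ≤ s) : φ (ginv φ s) ≤ s := by
  have hclosed : IsClosed {t : ℝ | 0 ≤ t ∧ φ t ≤ s} :=
    hφ.continuousOn.preimage_isClosed_of_isClosed isClosed_Ici isClosed_Iic
  exact (hclosed.csSup_mem ⟨0, le_rfl, hφ.2.2.1.symm ▸ hs⟩ (hφ.bddAbove_sublevel s)).2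

lemma exists_gt_ginv {s s' : ℝ} (hs : 0 ≤ s) (hss' : s < s') :
    ∃ t, ginv φ s < t ∧ φ t ≤ s' := by
  have hg := hφ.ginv_nonneg hs
  have hlt : ∀ᶠ t in 𝓝[Ici 0] ginv φ s, φ t < s' :=
    hφ.continuousOn _ hg (Iio_mem_nhds ((hφ.apply_ginv_le hs).trans_lt hss'))
  have hsub : Ioi (ginv φ s) ⊆ Ici 0 := fun t ht => hg.trans (le_of_lt ht)
  obtain ⟨t, hts', hgt⟩ :=
    ((hlt.filter_mono (nhdsWithin_mono _ hsub)).and self_mem_nhdsWithin).exists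
  exact ⟨t, hgt, hts'.le⟩

lemma strictMonoOn_ginv : StrictMonoOn (ginv φ) (Ici 0) := fun s hs s' _ hss' => by
  obtain ⟨t, hgt, hts'⟩ := hφ.exists_gt_ginv hs hss'
  exact hgt.trans_le (hφ.le_ginv ((hφ.ginv_nonneg hs).trans hgt.le) hts')

lemma ginv_pos {s : ℝ} (hs : 0 < s) : 0 < ginv φ s :=
  (hφ.ginv_nonneg le_rfl).trans_lt (hφ.strictMonoOn_ginv self_mem_Ici hs.le hs)

lemma concaveOn_ginv : ConcaveOn ℝ (Ici 0) (ginv φ) := by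
  refine ⟨convex_Ici 0, fun x hx y hy a b ha hb hab => ?_⟩
  have hgx := hφ.ginv_nonneg hx
  have hgy := hφ.ginv_nonneg hy
  refine hφ.le_ginv (by positivity) ?_
  calc φ (a • ginv φ x + b • ginv φ y) ≤ a • φ (ginv φ x) + b • φ (ginv φ y) :=
        hφ.1.2 hgx hgy ha hb hab
    _ ≤ a • x + b • y := by
        simp only [smul_eq_mul]
        gcongr
        exacts [hφ.apply_ginv_le hx, hφ.apply_ginv_le hy]

end IsOrliczFunction

lemma ConcaveOn.mul_apply_le_apply_mul {g : ℝ → ℝ} (hg : ConcaveOn ℝ (Ici 0) g)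
    (hg0 : 0 ≤ g 0) {c t : ℝ} (hc0 : 0 ≤ c) (hc1 : c ≤ 1) (ht : 0 ≤ t) :
    c * g t ≤ g (c * t) := by
  have h := hg.2 (mem_Ici.2 ht) self_mem_Ici hc0 (sub_nonneg.2 hc1) (add_sub_cancel c 1)
  simp only [smul_eq_mul, mul_zero, add_zero] at h
  nlinarith

lemma log_mul_div_eq {α : Type*} {c : ℝ} {f h : α → ℝ} (hc : 0 < c) (hf : ∀ x, 0 < f x)
    (hh : ∀ x, 0 < h x) :
    (fun x => log (c * f x / h x)) = fun x => log c + log (f x) - log (h x) :=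
  funext fun x => by rw [log_div (mul_pos hc (hf x)).ne' (hh x).ne', log_mul hc.ne' (hf x).ne']

section GeomMean

variable {α : Type*} [MeasurableSpace α] {μ : Measure α}

def geomMean (μ : Measure α) (f : α → ℝ) : ℝ := exp (∫ x, log (f x) ∂μ)

lemma geomMean_pos (f : α → ℝ) : 0 < geomMean μ f := exp_pos _

/-- The paper's `I_z` when `μ` is the harmonic measure of `z`; `0` stands for `exp (-∞)`. -/
def geomMeanCurve (μ : Measure α) (g : α → ℝ → ℝ) (t : ℝ) : ℝ :=
  if t ≤ 0 then 0 else geomMean μ fun x => g x t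

variable {g : α → ℝ → ℝ}

lemma geomMeanCurve_zero : geomMeanCurve μ g 0 = 0 := if_pos le_rfl

lemma geomMeanCurve_of_pos {t : ℝ} (ht : 0 < t) :
    geomMeanCurve μ g t = geomMean μ fun x => g x t :=
  if_neg ht.not_ge

variable [IsProbabilityMeasure μ] {f h : α → ℝ}

lemma geomMean_le_integral (hf : ∀ x, 0 < f x) (hlog : Integrable (fun x => log (f x)) μ)
    (hint : Integrable f μ) : geomMean μ f ≤ ∫ x, f x ∂μ := by
  have hexp : (exp ∘ fun x => log (f x)) = f := funext fun x => exp_log (hf x)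
  have hJensen := convexOn_exp.map_integral_le continuous_exp.continuousOn isClosed_univ
    (ae_of_all _ fun _ => mem_univ _) hlog (by rwa [hexp])
  rw [geomMean]
  simpa only [Function.comp_apply, exp_log (hf _)] using hJensen

lemma geomMean_lt_geomMean (hf : ∀ x, 0 < f x) (hlf : Integrable (fun x => log (f x)) μ)
    (hlh : Integrable (fun x => log (h x)) μ) (hfh : ∀ x, f x < h x) :
    geomMean μ f < geomMean μ h := by
  have hgap : ∀ x, 0 < log (h x) - log (f x) := fun x =>
    sub_pos.2 (log_lt_log (hf x) (hfh x))
  have hpos : 0 < ∫ x, (log (h x) - log (f x)) ∂μ := by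
    rw [integral_pos_iff_support_of_nonneg (fun x => (hgap x).le) (hlh.sub hlf),
      Function.support_eq_univ fun x => (hgap x).ne']
    simp
  rw [integral_sub hlh hlf] at hpos
  exact exp_lt_exp.2 (by linarith)

section Ratio

variable {c : ℝ} (hc : 0 < c) (hf : ∀ x, 0 < f x) (hh : ∀ x, 0 < h x)
  (hlf : Integrable (fun x => log (f x)) μ) (hlh : Integrable (fun x => log (h x)) μ)
include hc hf hh hlf hlh

lemma integrable_log_mul_div : Integrable (fun x => log (c * f x / h x)) μ := by
  rw [log_mul_div_eq hc hf hh]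
  exact ((integrable_const _).add hlf).sub hlh

lemma mul_geomMean_div_geomMean :
    c * geomMean μ f / geomMean μ h = geomMean μ (fun x => c * f x / h x) := by
  have hlcf : Integrable (fun x => log c + log (f x)) μ := (integrable_const _).add hlf
  rw [geomMean, geomMean, geomMean, log_mul_div_eq hc hf hh,
    integral_sub hlcf hlh, integral_add (integrable_const _) hlf,
    integral_const, probReal_univ, one_smul, exp_sub, exp_add, exp_log hc]

variable (hfh : ∀ x, c * f x ≤ h x)
include hfh

lemma integrable_mul_div : Integrable (fun x => c * f x / h x) μ := by
  refine Integrable.of_bound ?_ 1 (ae_of_all _ fun x => ?_)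
  · have hmeas := continuous_exp.comp_aestronglyMeasurable
      (integrable_log_mul_div hc hf hh hlf hlh).aestronglyMeasurable
    refine hmeas.congr (ae_of_all _ fun x => ?_)
    exact exp_log (div_pos (mul_pos hc (hf x)) (hh x))
  · rw [norm_of_nonneg (div_pos (mul_pos hc (hf x)) (hh x)).le]
    exact (div_le_one (hh x)).2 (hfh x)

lemma mul_geomMean_le_geomMean : c * geomMean μ f ≤ geomMean μ h := by
  rw [← div_le_one (geomMean_pos h), mul_geomMean_div_geomMean hc hf hh hlf hlh, geomMean,
    exp_le_one_iff]
  exact integral_nonpos fun x =>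
    log_nonpos (div_pos (mul_pos hc (hf x)) (hh x)).le ((div_le_one (hh x)).2 (hfh x))

lemma mul_geomMean_div_le_integral :
    c * geomMean μ f / geomMean μ h ≤ ∫ x, c * f x / h x ∂μ := by
  rw [mul_geomMean_div_geomMean hc hf hh hlf hlh]
  exact geomMean_le_integral (fun x => div_pos (mul_pos hc (hf x)) (hh x))
    (integrable_log_mul_div hc hf hh hlf hlh) (integrable_mul_div hc hf hh hlf hlh hfh)

end Ratio

lemma mul_geomMean_add_mul_geomMean_le {f₁ f₂ : α → ℝ} {c₁ c₂ : ℝ} (hc₁ : 0 < c₁)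
    (hc₂ : 0 < c₂) (hf₁ : ∀ x, 0 < f₁ x) (hf₂ : ∀ x, 0 < f₂ x) (hh : ∀ x, 0 < h x)
    (hlf₁ : Integrable (fun x => log (f₁ x)) μ)
    (hlf₂ : Integrable (fun x => log (f₂ x)) μ)
    (hlh : Integrable (fun x => log (h x)) μ)
    (hfh : ∀ x, c₁ * f₁ x + c₂ * f₂ x ≤ h x) :
    c₁ * geomMean μ f₁ + c₂ * geomMean μ f₂ ≤ geomMean μ h := by
  have hfh₁ : ∀ x, c₁ * f₁ x ≤ h x := fun x => by nlinarith [hf₂ x, hfh x]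
  have hfh₂ : ∀ x, c₂ * f₂ x ≤ h x := fun x => by nlinarith [hf₁ x, hfh x]
  have hq₁ := integrable_mul_div hc₁ hf₁ hh hlf₁ hlh hfh₁
  have hq₂ := integrable_mul_div hc₂ hf₂ hh hlf₂ hlh hfh₂
  rw [← div_le_one (geomMean_pos h), add_div]
  calc c₁ * geomMean μ f₁ / geomMean μ h + c₂ * geomMean μ f₂ / geomMean μ h
      ≤ (∫ x, c₁ * f₁ x / h x ∂μ) + ∫ x, c₂ * f₂ x / h x ∂μ :=
        add_le_add (mul_geomMean_div_le_integral hc₁ hf₁ hh hlf₁ hlh hfh₁)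
          (mul_geomMean_div_le_integral hc₂ hf₂ hh hlf₂ hlh hfh₂)
    _ = ∫ x, (c₁ * f₁ x + c₂ * f₂ x) / h x ∂μ := by
        rw [← integral_add hq₁ hq₂]
        simp only [add_div]
    _ ≤ ∫ _, (1 : ℝ) ∂μ :=
        integral_mono_of_nonneg
          (ae_of_all _ fun x =>
            (div_pos (add_pos (mul_pos hc₁ (hf₁ x)) (mul_pos hc₂ (hf₂ x))) (hh x)).le)
          (integrable_const _) (ae_of_all _ fun x => (div_le_one (hh x)).2 (hfh x))
    _ = 1 := by simp

section GeomMeanCurve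

variable {T : ℝ} (hpos : ∀ x t, 0 < t → 0 < g x t)
  (hlog : ∀ t ∈ Ioo 0 T, Integrable (fun x => log (g x t)) μ)
include hpos hlog

lemma concaveOn_geomMeanCurve (hconc : ∀ x, ConcaveOn ℝ (Ici 0) (g x))
    (hg0 : ∀ x, 0 ≤ g x 0) :
    ConcaveOn ℝ (Ico 0 T) (geomMeanCurve μ g) := by
  have hscale : ∀ t ∈ Ioo 0 T, ∀ c, 0 < c → c ≤ 1 →
      c * geomMeanCurve μ g t ≤ geomMeanCurve μ g (c * t) := fun t ht c hc0 hc1 => by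
    have hct : c * t ∈ Ioo 0 T := ⟨mul_pos hc0 ht.1, by nlinarith [ht.1, ht.2]⟩
    rw [geomMeanCurve_of_pos ht.1, geomMeanCurve_of_pos hct.1]
    exact mul_geomMean_le_geomMean hc0 (hpos · t ht.1) (hpos · _ hct.1) (hlog t ht)
      (hlog _ hct) fun x => (hconc x).mul_apply_le_apply_mul (hg0 x) hc0.le hc1 ht.1.le
  rw [concaveOn_iff_forall_pos]
  refine ⟨convex_Ico 0 T, fun s hs t ht a b ha hb hab => ?_⟩
  simp only [smul_eq_mul]
  rcases hs.1.eq_or_lt with rfl | hs0 <;> rcases ht.1.eq_or_lt with rfl | ht0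
  · simp [geomMeanCurve_zero]
  · simpa [geomMeanCurve_zero] using hscale t ⟨ht0, ht.2⟩ b hb (by linarith)
  · simpa [geomMeanCurve_zero] using hscale s ⟨hs0, hs.2⟩ a ha (by linarith)
  · have hst : a * s + b * t ∈ Ioo 0 T :=
      ⟨by positivity, by nlinarith [hs.2, ht.2]⟩
    rw [geomMeanCurve_of_pos hs0, geomMeanCurve_of_pos ht0, geomMeanCurve_of_pos hst.1]
    refine mul_geomMean_add_mul_geomMean_le ha hb (hpos · s hs0) (hpos · t ht0)
      (hpos · _ hst.1) (hlog s ⟨hs0, hs.2⟩) (hlog t ⟨ht0, ht.2⟩) (hlog _ hst) fun x => ?_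
    simpa only [smul_eq_mul] using (hconc x).2 hs.1 ht.1 ha.le hb.le hab

lemma strictMonoOn_geomMeanCurve (hmono : ∀ x, StrictMonoOn (g x) (Ioi 0)) :
    StrictMonoOn (geomMeanCurve μ g) (Ico 0 T) := fun s hs t ht hst => by
  have ht0 : 0 < t := hs.1.trans_lt hst
  rw [geomMeanCurve_of_pos ht0]
  rcases hs.1.eq_or_lt with rfl | hs0
  · rw [geomMeanCurve_zero]
    exact geomMean_pos _
  · rw [geomMeanCurve_of_pos hs0]
    exact geomMean_lt_geomMean (hpos · s hs0) (hlog s ⟨hs0, hs.2⟩) (hlog t ⟨ht0, ht.2⟩)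
      fun x => hmono x hs0 ht0 hst

end GeomMeanCurve

end GeomMean

theorem statement2_general (φ : ℝ → ℝ → ℝ)
    (horlicz : ∀ w : ℝ, IsOrliczFunction (φ w) ∧ IsNondegenerate (φ w))
    (t₀ : ℝ) (ht₀ : 0 < t₀)
    (hint : ∀ t ∈ Set.Ioo (0 : ℝ) t₀,
      IntervalIntegrable (fun w => Real.log (ginv (φ w) t)) volume (-π) π)
    (r θ : ℝ) (hr0 : 0 ≤ r) (hr1 : r < 1)
    (Iz : ℝ → ℝ)
    (hIz : ∀ t : ℝ, Iz t = if t ≤ 0 then 0 else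
      Real.exp ((1 / (2 * π)) *
        ∫ s in (-π)..π, poissonKernelRT r (θ - s) * Real.log (ginv (φ s) t))) :
    Iz 0 = 0 ∧ ∃ t' : ℝ, 0 < t' ∧ t' ≤ t₀ ∧
      ConcaveOn ℝ (Set.Ico 0 t') Iz ∧ StrictMonoOn Iz (Set.Ico 0 t') := by
  have := isProbabilityMeasure_poissonMeasure (θ := θ) hr0 hr1
  have hφ : ∀ w, IsOrliczFunction (φ w) := fun w => (horlicz w).1
  have hIz_eq : Iz = geomMeanCurve (poissonMeasure r θ) fun w => ginv (φ w) := by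
    funext t
    rw [hIz, geomMeanCurve, geomMean, integral_poissonMeasure hr0 hr1]
  have hpos : ∀ w t, 0 < t → 0 < ginv (φ w) t := fun w _ ht => (hφ w).ginv_pos ht
  have hlog : ∀ t ∈ Ioo 0 t₀,
      Integrable (fun w => log (ginv (φ w) t)) (poissonMeasure r θ) :=
    fun t ht => (hint t ht).integrable_poissonMeasure hr0 hr1
  refine ⟨hIz_eq ▸ geomMeanCurve_zero, t₀, ht₀, le_rfl, ?_, ?_⟩ <;> rw [hIz_eq]
  · exact concaveOn_geomMeanCurve hpos hlog (fun w => (hφ w).concaveOn_ginv)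
      fun w => (hφ w).ginv_nonneg le_rfl
  · exact strictMonoOn_geomMeanCurve hpos hlog fun w =>
      (hφ w).strictMonoOn_ginv.mono Ioi_subset_Ici_self

/-- Proposition on the interpolated inverse: if `{φ_w}` is a family of nondegenerate
Orlicz functions (indexed by the angle, `2π`-periodically), Borel in `w`, with
`w ↦ log φ_w⁻¹(t)` integrable for `t ∈ (0,t₀)`, then the function
`I_z(t) = exp((1/2π) ∫ P(r,θ-s) log φ_{e^{is}}⁻¹(t) ds)` (with `I_z(0) = 0` by the
conventions `log 0 = -∞`, `exp(-∞) = 0`) vanishes at `0` and is concave and strictly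
increasing on `[0,t')` for some `0 < t' ≤ t₀`. -/
theorem statement2 (φ : ℝ → ℝ → ℝ)
    (horlicz : ∀ w : ℝ, IsOrliczFunction (φ w) ∧ IsNondegenerate (φ w))
    (hper : ∀ t : ℝ, Function.Periodic (fun w => φ w t) (2 * π))
    (hborel : ∀ t : ℝ, 0 ≤ t → Measurable fun w => φ w t)
    (t₀ : ℝ) (ht₀ : 0 < t₀)
    (hint : ∀ t ∈ Set.Ioo (0 : ℝ) t₀,
      IntervalIntegrable (fun w => Real.log (ginv (φ w) t)) volume (-π) π)
    (r θ : ℝ) (hr0 : 0 ≤ r) (hr1 : r < 1)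
    (Iz : ℝ → ℝ)
    (hIz : ∀ t : ℝ, Iz t = if t ≤ 0 then 0 else
      Real.exp ((1 / (2 * π)) *
        ∫ s in (-π)..π, poissonKernelRT r (θ - s) * Real.log (ginv (φ s) t))) :
    Iz 0 = 0 ∧ ∃ t' : ℝ, 0 < t' ∧ t' ≤ t₀ ∧
      ConcaveOn ℝ (Set.Ico 0 t') Iz ∧ StrictMonoOn Iz (Set.Ico 0 t') :=
  statement2_general φ horlicz t₀ ht₀ hint r θ hr0 hr1 Iz hIz
end
end

section
/- Let {φ_w}_{w∈𝕋} be a family of nondegenerate Orlicz functions such that w ↦ φ_w(t) is Borel for every t ≥ 0. Then the map T : 𝕋 × ℂ^ℕ → [0,∞] defined by T(w,x) = inf{ρ > 0 : ∑_{n=1}^∞ φ_w(|x(n)|/ρ) ≤ 1} (with inf ∅ = ∞), i.e. the Luxemburg norm of x in ℓ_{φ_w}, is Borel measurable, where ℂ^ℕ carries the product topology. -/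
/-! The modular `ρ ↦ ∑ φ_w(|x n| / ρ)` is antitone, so the infimum defining the Luxemburg
norm may be taken over rational `ρ`: the norm is a countable infimum of functions that are
measurable once the modular at a fixed scale is. Each `φ_w` is continuous on `[0, ∞)`
(convex, and squeezed at `0` between `φ_w 0` and a chord), so `(t, w) ↦ φ_w t` is a
Carathéodory function and therefore jointly measurable. -/

open MeasureTheory Real Set Filter
open scoped ENNReal

noncomputable section

instance : Fact (0 < 2 * π) := ⟨by positivity⟩

/-- The Luxemburg norm of `x` in `ℓ_φ`, with values in `[0,∞]`
(`inf ∅ = ∞`, i.e. the norm is `∞` when `x ∉ ℓ_φ`). -/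
def luxNorm (φ : ℝ → ℝ) (x : ℕ → ℂ) : ℝ≥0∞ :=
  sInf {p : ℝ≥0∞ | ∃ ρ : ℝ, 0 < ρ ∧ p = ENNReal.ofReal ρ ∧
    (∑' n, ENNReal.ofReal (φ (‖x n‖ / ρ))) ≤ 1}

open scoped Topology in
lemma ConvexOn.continuousWithinAt_Ici_of_monotoneOn {f : ℝ → ℝ} {y : ℝ}
    (hconv : ConvexOn ℝ (Ici y) f) (hmono : MonotoneOn f (Ici y)) :
    ContinuousWithinAt f (Ici y) y := by
  set chord : ℝ → ℝ := fun x => f y + (x - y) * (f (y + 1) - f y)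
  have hchord : Tendsto chord (𝓝[Ici y] y) (𝓝 (f y)) := by
    have : Continuous chord := by fun_prop
    simpa [chord] using (this.tendsto y).mono_left nhdsWithin_le_nhds
  have hlower : ∀ᶠ x in 𝓝[Ici y] y, f y ≤ f x := by
    filter_upwards [self_mem_nhdsWithin] with x hx using hmono self_mem_Ici hx hx
  have hupper : ∀ᶠ x in 𝓝[Ici y] y, f x ≤ chord x := by
    filter_upwards [Icc_mem_nhdsGE (lt_add_one y)] with x ⟨hyx, hxy⟩
    calc f x = f ((1 - (x - y)) • y + (x - y) • (y + 1)) := by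
          congr 1; simp only [smul_eq_mul]; ring
      _ ≤ (1 - (x - y)) • f y + (x - y) • f (y + 1) :=
          hconv.2 self_mem_Ici (show y + 1 ∈ Ici y by simp)
            (by linarith) (by linarith) (by ring)
      _ = chord x := by simp only [chord, smul_eq_mul]; ring
  exact tendsto_of_tendsto_of_tendsto_of_le_of_le' tendsto_const_nhds hchord hlower hupper

lemma IsOrliczFunction.continuousOn_s3 {φ : ℝ → ℝ} (h : IsOrliczFunction φ) :
    ContinuousOn φ (Ici 0) :=
  h.1.continuousOn_Ici (h.1.continuousWithinAt_Ici_of_monotoneOn h.2.1)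

def orliczModular {ι E : Type*} [NormedAddCommGroup E] (φ : ℝ → ℝ) (x : ι → E) (ρ : ℝ) :
    ℝ≥0∞ :=
  ∑' n, ENNReal.ofReal (φ (‖x n‖ / ρ))

lemma orliczModular_antitoneOn {ι E : Type*} [NormedAddCommGroup E] {φ : ℝ → ℝ}
    (hφ : MonotoneOn φ (Ici 0)) (x : ι → E) : AntitoneOn (orliczModular φ x) (Ioi 0) :=
  fun _ hρ _ _ hle => ENNReal.tsum_le_tsum fun _ => ENNReal.ofReal_le_ofReal <|
    hφ (div_nonneg (norm_nonneg _) (hρ.trans_le hle).le) (div_nonneg (norm_nonneg _) hρ.le)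
      (div_le_div_of_nonneg_left (norm_nonneg _) hρ hle)

lemma luxNorm_eq_iInf_rat {φ : ℝ → ℝ} (hφ : MonotoneOn φ (Ici 0)) (x : ℕ → ℂ) :
    luxNorm φ x = ⨅ q : {q : ℚ // 0 < q},
      if orliczModular φ x q ≤ 1 then ENNReal.ofReal q else ⊤ := by
  apply le_antisymm
  · refine le_iInf fun ⟨q, hq⟩ => ?_
    split_ifs with hmod
    · exact sInf_le ⟨q, by exact_mod_cast hq, rfl, hmod⟩
    · exact le_top
  · refine le_sInf ?_
    rintro _ ⟨ρ, hρ, rfl, hmod⟩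
    refine ENNReal.le_of_forall_pos_le_add fun ε hε _ => ?_
    obtain ⟨q, hρq, hqε⟩ := exists_rat_btwn (lt_add_of_pos_right ρ hε)
    have hq : (0 : ℝ) < q := hρ.trans hρq
    calc ⨅ q : {q : ℚ // 0 < q}, (if orliczModular φ x q ≤ 1 then ENNReal.ofReal q else ⊤)
        ≤ ENNReal.ofReal q := by
          refine (iInf_le _ ⟨q, by exact_mod_cast hq⟩).trans ?_
          rw [if_pos ((orliczModular_antitoneOn hφ x hρ hq hρq.le).trans hmod)]
      _ ≤ ENNReal.ofReal ρ + ε := by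
          simpa using (ENNReal.ofReal_le_ofReal hqε.le).trans ENNReal.ofReal_add_le

section Measurability

variable {W : Type*} [MeasurableSpace W] {φ : W → ℝ → ℝ}

lemma measurable_uncurry_max_zero (hcont : ∀ w, ContinuousOn (φ w) (Ici 0))
    (hmeas : ∀ t, 0 ≤ t → Measurable fun w => φ w t) :
    Measurable fun p : ℝ × W => φ p.2 (max p.1 0) :=
  measurable_uncurry_of_continuous_of_measurable
    (fun w => (hcont w).comp_continuous (continuous_id.max continuous_const)
      fun t => le_max_right t 0)
    fun t => hmeas _ (le_max_right t 0)

lemma measurable_orliczModular {ι E : Type*} [Countable ι] [NormedAddCommGroup E]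
    [MeasurableSpace E] [OpensMeasurableSpace E]
    (hcont : ∀ w, ContinuousOn (φ w) (Ici 0)) (hmeas : ∀ t, 0 ≤ t → Measurable fun w => φ w t)
    {ρ : ℝ} (hρ : 0 ≤ ρ) :
    Measurable fun p : W × (ι → E) => orliczModular (φ p.1) p.2 ρ := by
  refine Measurable.tsum fun n => ENNReal.measurable_ofReal.comp ?_
  have hscaled : Measurable fun p : W × (ι → E) => ‖p.2 n‖ / ρ :=
    ((measurable_pi_apply n).comp measurable_snd).norm.div_const ρ
  convert (measurable_uncurry_max_zero hcont hmeas).comp (hscaled.prodMk measurable_fst)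
    using 2 with p
  simp [max_eq_left (div_nonneg (norm_nonneg (p.2 n)) hρ)]

end Measurability

/-- If `{φ_w}_{w ∈ 𝕋}` is a family of nondegenerate Orlicz functions with `w ↦ φ_w(t)`
Borel for every `t ≥ 0`, then `(w,x) ↦ ‖x‖_{ℓ_{φ_w}}` is Borel on `𝕋 × ℂ^ℕ`, where
`ℂ^ℕ` carries the product topology. -/
theorem statement3 (φ : AddCircle (2 * π) → ℝ → ℝ)
    (horlicz : ∀ w, IsOrliczFunction (φ w) ∧ IsNondegenerate (φ w))
    (hborel : ∀ t : ℝ, 0 ≤ t → Measurable fun w => φ w t) :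
    Measurable (fun p : AddCircle (2 * π) × (ℕ → ℂ) => luxNorm (φ p.1) p.2) := by
  have hcont : ∀ w, ContinuousOn (φ w) (Ici 0) := fun w => (horlicz w).1.continuousOn_s3
  have hmono : ∀ w, MonotoneOn (φ w) (Ici 0) := fun w => (horlicz w).1.2.1
  have hmod (q : {q : ℚ // 0 < q}) :
      Measurable fun p : AddCircle (2 * π) × (ℕ → ℂ) => orliczModular (φ p.1) p.2 q :=
    measurable_orliczModular hcont hborel (by exact_mod_cast q.2.le)
  simp only [luxNorm_eq_iInf_rat (hmono _)]
  exact .iInf fun q => .ite (measurableSet_le (hmod q) measurable_const)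
    measurable_const measurable_const
end
end

section
/- Let n ∈ ℕ, let φ_1, …, φ_n be nondegenerate Orlicz functions, let θ_1, …, θ_n > 0 with ∑_j θ_j = 1, and let φ_z be a nondegenerate Orlicz function satisfying φ_z^{-1}(s) = ∏_{j=1}^n (φ_j^{-1}(s))^{θ_j} for all s ≥ 0. Suppose x, x_1, …, x_n ∈ ℂ^ℕ satisfy |x(k)| = ∏_{j=1}^n |x_j(k)|^{θ_j} for all k, and ∑_k φ_j(|x_j(k)|/2) ≤ 1 for each j = 1, …, n. Then ∑_k φ_z(|x(k)|/2) ≤ n. -/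
open MeasureTheory Real Set Filter
open scoped ENNReal

noncomputable section

/-!
Pointwise, put `s = ∑_j φ_j(|x_j(k)|/2)`. Each `|x_j(k)|/2` lies below `φ_j⁻¹(s)`, so
`|x(k)|/2 = ∏_j (|x_j(k)|/2)^{θ_j} ≤ ∏_j φ_j⁻¹(s)^{θ_j} = φ_z⁻¹(s)`, and `φ_z(φ_z⁻¹(s)) ≤ s`
because a convex function is continuous inside its domain. Summing over `k` and exchanging the
two sums gives at most `∑_j 1 = n`.
-/

section GeneralizedInverse

variable {φ : ℝ → ℝ}

lemma bddAbove_sublevel_of_tendsto_atTop (htop : Tendsto φ atTop atTop) (s : ℝ) :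
    BddAbove {t : ℝ | 0 ≤ t ∧ φ t ≤ s} := by
  obtain ⟨M, hM⟩ := eventually_atTop.1 (htop.eventually_gt_atTop s)
  refine ⟨M, fun t ht => ?_⟩
  by_contra! hMt
  exact (hM t hMt.le).not_ge ht.2

lemma le_ginv_of_apply_le (htop : Tendsto φ atTop atTop) {s t : ℝ} (ht : 0 ≤ t)
    (hφt : φ t ≤ s) : t ≤ ginv φ s :=
  le_csSup (bddAbove_sublevel_of_tendsto_atTop htop s) ⟨ht, hφt⟩

lemma apply_ginv_le (hconv : ConvexOn ℝ (Ici 0) φ) (hmono : MonotoneOn φ (Ici 0))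
    (htop : Tendsto φ atTop atTop) {s : ℝ} (hs : φ 0 ≤ s) : φ (ginv φ s) ≤ s := by
  have hne : {t : ℝ | 0 ≤ t ∧ φ t ≤ s}.Nonempty := ⟨0, le_rfl, hs⟩
  rcases (le_ginv_of_apply_le htop le_rfl hs).eq_or_lt with hzero | hpos
  · rwa [← hzero]
  set m := ginv φ s
  have hbelow : ∀ t ∈ Ioo 0 m, φ t ≤ s := fun t ht => by
    obtain ⟨t', ⟨ht'0, ht's⟩, htt'⟩ := exists_lt_of_lt_csSup hne ht.2
    exact (hmono ht.1.le ht'0 htt'.le).trans ht's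
  have hcont : ContinuousAt φ m :=
    (hconv.continuousOn_interior m (by rwa [interior_Ici])).continuousAt
      (by simpa only [interior_Ici] using Ioi_mem_nhds hpos)
  exact le_of_tendsto (hcont.mono_left nhdsWithin_le_nhds)
    (mem_of_superset (Ioo_mem_nhdsLT hpos) hbelow)

end GeneralizedInverse

lemma prod_rpow_div_of_sum_eq_one {ι : Type*} (s : Finset ι) {a θ : ι → ℝ} {c : ℝ}
    (ha : ∀ j ∈ s, 0 ≤ a j) (hc : 0 < c) (hθ : ∑ j ∈ s, θ j = 1) :
    (∏ j ∈ s, a j ^ θ j) / c = ∏ j ∈ s, (a j / c) ^ θ j := by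
  rw [Finset.prod_congr rfl fun j hj => div_rpow (ha j hj) hc.le (θ j), Finset.prod_div_distrib,
    ← rpow_sum_of_pos hc, hθ, rpow_one]

lemma apply_prod_rpow_le_sum {ι : Type*} [Fintype ι] {φ : ι → ℝ → ℝ} {θ : ι → ℝ}
    {φz : ℝ → ℝ} (hφ : ∀ j, IsOrliczFunction (φ j)) (hθ : ∀ j, 0 ≤ θ j)
    (hφz : IsOrliczFunction φz) (hinv : ∀ s, 0 ≤ s → ginv φz s = ∏ j, ginv (φ j) s ^ θ j)
    {a : ι → ℝ} (ha : ∀ j, 0 ≤ a j) :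
    φz (∏ j, a j ^ θ j) ≤ ∑ j, φ j (a j) := by
  obtain ⟨hconv, hmono, hzero, -, htop⟩ := hφz
  set s := ∑ j, φ j (a j)
  have hs : 0 ≤ s := Finset.sum_nonneg fun j _ => (hφ j).2.2.2.1 _ (ha j)
  have hle_ginv : ∏ j, a j ^ θ j ≤ ginv φz s := by
    rw [hinv s hs]
    refine Finset.prod_le_prod (fun j _ => rpow_nonneg (ha j) _) fun j _ =>
      rpow_le_rpow (ha j) (le_ginv_of_apply_le (hφ j).2.2.2.2 (ha j) ?_) (hθ j)
    exact Finset.single_le_sum (fun i _ => (hφ i).2.2.2.1 _ (ha i)) (Finset.mem_univ j)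
  calc φz (∏ j, a j ^ θ j)
      ≤ φz (ginv φz s) :=
        hmono (Finset.prod_nonneg fun j _ => rpow_nonneg (ha j) _)
          (le_ginv_of_apply_le htop le_rfl (hzero.trans_le hs)) hle_ginv
    _ ≤ s := apply_ginv_le hconv hmono htop (hzero.trans_le hs)

theorem statement9_general (n : ℕ) (φ : Fin n → ℝ → ℝ)
    (hφ : ∀ j, IsOrliczFunction (φ j) ∧ IsNondegenerate (φ j))
    (θ : Fin n → ℝ) (hθpos : ∀ j, 0 < θ j) (hθsum : ∑ j, θ j = 1)
    (φz : ℝ → ℝ) (hφz : IsOrliczFunction φz ∧ IsNondegenerate φz)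
    (hinv : ∀ s : ℝ, 0 ≤ s → ginv φz s = ∏ j, ginv (φ j) s ^ θ j)
    (x : ℕ → ℂ) (xs : Fin n → (ℕ → ℂ))
    (hfact : ∀ k : ℕ, ‖x k‖ = ∏ j, ‖xs j k‖ ^ θ j)
    (hxs : ∀ j, (∑' k, ENNReal.ofReal (φ j (‖xs j k‖ / 2))) ≤ 1) :
    (∑' k, ENNReal.ofReal (φz (‖x k‖ / 2))) ≤ (n : ℝ≥0∞) := by
  have hterm : ∀ j k, 0 ≤ φ j (‖xs j k‖ / 2) := fun j k => (hφ j).1.2.2.2.1 _ (by positivity)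
  have hpoint : ∀ k, φz (‖x k‖ / 2) ≤ ∑ j, φ j (‖xs j k‖ / 2) := fun k => by
    rw [hfact k, prod_rpow_div_of_sum_eq_one _ (fun j _ => norm_nonneg _) two_pos hθsum]
    exact apply_prod_rpow_le_sum (fun j => (hφ j).1) (fun j => (hθpos j).le) hφz.1 hinv
      fun j => by positivity
  calc (∑' k, ENNReal.ofReal (φz (‖x k‖ / 2)))
      ≤ ∑' k, ∑ j, ENNReal.ofReal (φ j (‖xs j k‖ / 2)) := ENNReal.tsum_le_tsum fun k => by
        rw [← ENNReal.ofReal_sum_of_nonneg fun j _ => hterm j k]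
        exact ENNReal.ofReal_le_ofReal (hpoint k)
    _ = ∑ j, ∑' k, ENNReal.ofReal (φ j (‖xs j k‖ / 2)) :=
        Summable.tsum_finsetSum fun _ _ => ENNReal.summable
    _ ≤ ∑ _j : Fin n, 1 := Finset.sum_le_sum fun j _ => hxs j
    _ = n := by simp

/-- Key step of the Lozanovskii-type inclusion: if `φ_z⁻¹ = ∏_j (φ_j⁻¹)^{θ_j}`,
`|x| = ∏_j |x_j|^{θ_j}` pointwise and `∑_k φ_j(|x_j(k)|/2) ≤ 1` for each `j`, then
`∑_k φ_z(|x(k)|/2) ≤ n`. -/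
theorem statement9 (n : ℕ) (hn : 0 < n) (φ : Fin n → ℝ → ℝ)
    (hφ : ∀ j, IsOrliczFunction (φ j) ∧ IsNondegenerate (φ j))
    (θ : Fin n → ℝ) (hθpos : ∀ j, 0 < θ j) (hθsum : ∑ j, θ j = 1)
    (φz : ℝ → ℝ) (hφz : IsOrliczFunction φz ∧ IsNondegenerate φz)
    (hinv : ∀ s : ℝ, 0 ≤ s → ginv φz s = ∏ j, ginv (φ j) s ^ θ j)
    (x : ℕ → ℂ) (xs : Fin n → (ℕ → ℂ))
    (hfact : ∀ k : ℕ, ‖x k‖ = ∏ j, ‖xs j k‖ ^ θ j)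
    (hxs : ∀ j, (∑' k, ENNReal.ofReal (φ j (‖xs j k‖ / 2))) ≤ 1) :
    (∑' k, ENNReal.ofReal (φz (‖x k‖ / 2))) ≤ (n : ℝ≥0∞) :=
  statement9_general n φ hφ θ hθpos hθsum φz hφz hinv x xs hfact hxs
end
end

section
/- Let ψ¹(t) = t(log t)² and ψ²(s) = e^{−1+√(1−s)}(s − (1 − √(1−s))²) for 0 ≤ s < 1. Then there exists δ ∈ (0,1) such that for all t ∈ (1−δ, 1): ψ²((log t)²/5) < t (log t)², i.e. ψ²(ψ¹(t)/(5t)) − ψ¹(t) < 0. -/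
/-! For `s ≥ 0` the exponential factor of `ψ²(s)` is at most `1`, so `ψ²(s) ≤ s`. Hence
`ψ²((log t)²/5) ≤ (log t)²/5 < t (log t)²` as soon as `t > 1/5`, and `δ = 1/2` works. -/

open Real

noncomputable section

/-- `ψ¹(t) = t (log t)²`. -/
def psi1 (t : ℝ) : ℝ := t * Real.log t ^ 2

/-- `ψ²(s) = e^{-1+√(1-s)} (s - (1-√(1-s))²)`, the Young conjugate of `ψ¹` for
`0 ≤ s < 1`. -/
def psi2 (s : ℝ) : ℝ :=
  Real.exp (-1 + Real.sqrt (1 - s)) * (s - (1 - Real.sqrt (1 - s)) ^ 2)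

lemma psi2_le_self {s : ℝ} (hs : 0 ≤ s) : psi2 s ≤ s := by
  have hexp_le_one : Real.exp (-1 + Real.sqrt (1 - s)) ≤ 1 := by
    rw [Real.exp_le_one_iff]
    linarith [Real.sqrt_le_one.mpr (by linarith : 1 - s ≤ 1)]
  calc psi2 s ≤ Real.exp (-1 + Real.sqrt (1 - s)) * s := by
        unfold psi2
        gcongr
        linarith [sq_nonneg (1 - Real.sqrt (1 - s))]
    _ ≤ s := mul_le_of_le_one_left hs hexp_le_one

lemma psi1_div_mul_self {t : ℝ} (ht : t ≠ 0) (c : ℝ) :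
    psi1 t / (c * t) = Real.log t ^ 2 / c := by
  unfold psi1
  field_simp

lemma psi2_log_sq_div_five_lt {t : ℝ} (ht : 1 / 5 < t) (ht₁ : t ≠ 1) :
    psi2 (Real.log t ^ 2 / 5) < t * Real.log t ^ 2 := by
  have hlog_sq : 0 < Real.log t ^ 2 :=
    pow_two_pos_of_ne_zero (Real.log_ne_zero_of_pos_of_ne_one (by linarith) ht₁)
  calc psi2 (Real.log t ^ 2 / 5) ≤ Real.log t ^ 2 / 5 := psi2_le_self (by positivity)
    _ < t * Real.log t ^ 2 := by linarith [mul_lt_mul_of_pos_right ht hlog_sq]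

/-- For `t < 1` close enough to `1`, `ψ²((log t)²/5) < t (log t)²`, i.e.
`ψ²(ψ¹(t)/(5t)) - ψ¹(t) < 0`. -/
theorem statement14 : ∃ δ : ℝ, 0 < δ ∧ δ < 1 ∧ ∀ t : ℝ, 1 - δ < t → t < 1 →
    psi2 (Real.log t ^ 2 / 5) < t * Real.log t ^ 2 ∧
    psi2 (psi1 t / (5 * t)) - psi1 t < 0 := by
  refine ⟨1 / 2, by norm_num, by norm_num, fun t ht ht₁ => ?_⟩
  have hlt : psi2 (Real.log t ^ 2 / 5) < t * Real.log t ^ 2 :=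
    psi2_log_sq_div_five_lt (by linarith) ht₁.ne
  refine ⟨hlt, ?_⟩
  rw [psi1_div_mul_self (by linarith) 5, psi1]
  linarith
end
end
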